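/- arXiv:2604.25028 — 2 statements merged into one kernel-verified Lean document; each statement's English description precedes it below -/
import Mathlib

section
/- If A ⊆ R is analytic but not Borel, then the concept class C_A = {0} ∪ {indicator of {a} : a ∈ A} satisfies WB_meas (every one-sided ghost bad event with measurable target is null-measurable under every product probability measure) but fails the Borel ghost-gap condition KW: there exist a measurable target c, sample size m, and threshold such that the supremum ghost-gap map p ↦ sup_{h ∈ C_A} (L_T(h,c) − L_S(h,c)) is not Borel measurable. -/
open MeasureTheory

/-- Empirical zero-one error of hypothesis `h` against target `c` on the sample `S`
(with the empty-sample average equal to `0` when `m = 0`). -/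
noncomputable def empErr {X : Type*} (h c : X → Bool) (m : ℕ) (S : Fin m → X) : ℝ :=
  ((Finset.univ.filter fun i : Fin m => h (S i) ≠ c (S i)).card : ℝ) / m

/-- One-sided ghost gap: ghost empirical error minus training empirical error. -/
noncomputable def ghostGap {X : Type*} (h c : X → Bool) (m : ℕ)
    (p : (Fin m → X) × (Fin m → X)) : ℝ :=
  empErr h c m p.2 - empErr h c m p.1

/-- One-sided ghost bad event of a concept class. -/
def badEvent {X : Type*} (C : Set (X → Bool)) (c : X → Bool) (m : ℕ) (ε : ℝ) :
    Set ((Fin m → X) × (Fin m → X)) :=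
  {p | ∃ h ∈ C, ghostGap h c m p ≥ ε / 2}

/-- The product measure `μ^{2m}` on `X^m × X^m`. -/
noncomputable def prodMeas {X : Type*} [MeasurableSpace X] (μ : Measure X) (m : ℕ) :
    Measure ((Fin m → X) × (Fin m → X)) :=
  (Measure.pi fun _ : Fin m => μ).prod (Measure.pi fun _ : Fin m => μ)

/-- Measurable-target well-behavedness: every one-sided ghost bad event with a
measurable target is measurable in the completion of every product probability
measure `μ^{2m}`. -/
def WBmeas {X : Type*} [MeasurableSpace X] (C : Set (X → Bool)) : Prop :=
  ∀ (μ : Measure X), IsProbabilityMeasure μ →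
    ∀ c : X → Bool, Measurable c → ∀ m : ℕ, ∀ ε : ℝ, 0 < ε →
      NullMeasurableSet (badEvent C c m ε) (prodMeas μ m)

/-- The class `C_A = {0} ∪ {𝟙_{a} : a ∈ A}`. -/
def singletonClass (A : Set ℝ) : Set (ℝ → Bool) :=
  {fun _ => false} ∪ {h | ∃ a ∈ A, h = fun x => decide (x = a)}

/-- The one-sided supremum ghost-gap map of a class. -/
noncomputable def supGhostGap {X : Type*} (C : Set (X → Bool)) (c : X → Bool) (m : ℕ)
    (p : (Fin m → X) × (Fin m → X)) : ℝ :=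
  sSup {g : ℝ | ∃ h ∈ C, g = ghostGap h c m p}

/-!
The bad event of `C_A` is the bad event of the zero hypothesis, which is Borel, together with
the projection `(a, S, T) ↦ (S, T)` of `{(a, S, T) | a ∈ A, L_T(𝟙_{a}) - L_S(𝟙_{a}) ≥ ε/2}`.
The latter is the intersection of an analytic set with a Borel one, so its projection is
analytic, and analytic sets are universally measurable. This rests on Lusin's capacitability
argument: for `A = f '' (ℕ → ℕ)`, choosing the bounds `σ k` greedily one coordinate at a time
keeps `μ (f '' {x | ∀ i < k, x i ≤ σ i})` above `μ A - ε`, and the intersection of the closures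
of these images lies in the compact set `f '' Iic σ`.

For `m = 1` and the target `0`, the supremum gap is the indicator of
`{(S, T) | T 0 ∈ A, S 0 ≠ T 0}`, whose slice at `S 0 = 0` is `A \ {0}`; were it Borel, so
would be `A`.
-/

open Set Filter Topology
open scoped ENNReal

lemma Pi.isCompact_Iic {ι β : Type*} [TopologicalSpace β] [Preorder β] [LocallyFiniteOrderBot β]
    (σ : ι → β) : IsCompact (Iic σ) := by
  rw [← pi_univ_Iic]
  exact isCompact_univ_pi fun i => (finite_Iic (σ i)).isCompact

def prefixBounded (s : ℕ → ℕ) (k : ℕ) : Set (ℕ → ℕ) :=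
  {x | ∀ i < k, x i ≤ s i}

namespace prefixBounded

variable {s t : ℕ → ℕ} {k : ℕ}

@[simp]
lemma zero (s : ℕ → ℕ) : prefixBounded s 0 = univ := by
  simp [prefixBounded]

lemma antitone (s : ℕ → ℕ) : Antitone (prefixBounded s) :=
  fun _ _ hkl _ hx i hi => hx i (hi.trans_le hkl)

lemma congr (h : ∀ i < k, s i = t i) : prefixBounded s k = prefixBounded t k := by
  ext x
  exact forall₂_congr fun i hi => by rw [h i hi]

lemma update_mono (s : ℕ → ℕ) (k : ℕ) :
    Monotone fun n => prefixBounded (Function.update s k n) (k + 1) := by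
  intro n n' hn x hx i hi
  rcases Nat.lt_succ_iff_lt_or_eq.1 hi with hik | rfl
  · simpa [Function.update_of_ne hik.ne] using hx i hi
  · simpa using (hx i hi).trans (by simpa using hn)

lemma iUnion_update (s : ℕ → ℕ) (k : ℕ) :
    ⋃ n, prefixBounded (Function.update s k n) (k + 1) = prefixBounded s k := by
  ext x
  simp only [mem_iUnion, prefixBounded, mem_ofPred_eq]
  refine ⟨fun ⟨n, hx⟩ i hi => ?_, fun hx => ⟨x k, fun i hi => ?_⟩⟩
  · simpa [Function.update_of_ne hi.ne] using hx i (hi.trans k.lt_succ_self)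
  · rcases Nat.lt_succ_iff_lt_or_eq.1 hi with hik | rfl
    · simpa [Function.update_of_ne hik.ne] using hx i hik
    · simp

end prefixBounded

lemma exists_forall_prefixBounded {Q : Set (ℕ → ℕ) → Prop} (h0 : Q univ)
    (hstep : ∀ s k, Q (prefixBounded s k) →
      ∃ n, Q (prefixBounded (Function.update s k n) (k + 1))) :
    ∃ σ, ∀ k, Q (prefixBounded σ k) := by
  choose! g hg using hstep
  let T : ℕ → ℕ → ℕ :=
    fun k => Nat.rec (fun _ => 0) (fun k s => Function.update s k (g s k)) k
  have hT : ∀ k, Q (prefixBounded (T k) k) := by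
    intro k
    induction k with
    | zero => simpa using h0
    | succ k ih => exact hg _ _ ih
  have hstable : ∀ m, ∀ i < m, T m i = T (i + 1) i := by
    intro m
    induction m with
    | zero => intro i hi; omega
    | succ m ih =>
      intro i hi
      rcases Nat.lt_succ_iff_lt_or_eq.1 hi with him | rfl
      · exact (Function.update_of_ne him.ne _ _).trans (ih i him)
      · rfl
  exact ⟨fun i => T (i + 1) i, fun k => prefixBounded.congr (hstable k) ▸ hT k⟩

lemma iInter_closure_image_prefixBounded_subset {α : Type*} [TopologicalSpace α] [T2Space α]
    [FirstCountableTopology α] {f : (ℕ → ℕ) → α} (hf : Continuous f) (σ : ℕ → ℕ) :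
    ⋂ k, closure (f '' prefixBounded σ k) ⊆ f '' Iic σ := by
  intro y hy
  obtain ⟨U, hU⟩ := (𝓝 y).exists_antitone_basis
  have hx : ∀ k, ∃ x ∈ prefixBounded σ k, f x ∈ U k := fun k => by
    obtain ⟨_, hyU, x, hx, rfl⟩ :=
      mem_closure_iff_nhds.1 (mem_iInter.1 hy k) (U k) (hU.mem k)
    exact ⟨x, hx, hyU⟩
  choose x hxσ hxU using hx
  -- truncating `x k` at `σ` changes no coordinate `i < k`, and lands in the compact set `Iic σ`
  obtain ⟨c, hcσ, φ, hφ, hlim⟩ := (Pi.isCompact_Iic σ).tendsto_subseq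
    (x := fun k => x k ⊓ σ) fun k => mem_Iic.2 inf_le_right
  have hxc : Tendsto (x ∘ φ) atTop (𝓝 c) := by
    refine tendsto_pi_nhds.2 fun i => (tendsto_pi_nhds.1 hlim i).congr' ?_
    filter_upwards [hφ.tendsto_atTop.eventually_gt_atTop i] with n hn
    exact inf_eq_left.2 (hxσ (φ n) i hn)
  have hfc : Tendsto (f ∘ x ∘ φ) atTop (𝓝 (f c)) := (hf.tendsto c).comp hxc
  have hfy : Tendsto (f ∘ x ∘ φ) atTop (𝓝 y) := (hU.tendsto hxU).comp hφ.tendsto_atTop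
  exact ⟨c, hcσ, tendsto_nhds_unique hfc hfy⟩

section Capacitability

variable {α : Type*} [TopologicalSpace α] [T2Space α] [FirstCountableTopology α]
  [MeasurableSpace α] [OpensMeasurableSpace α] {A : Set α}

theorem MeasureTheory.AnalyticSet.exists_isCompact_subset_measure_le_add (hA : AnalyticSet A)
    (μ : Measure α) [IsFiniteMeasure μ] {ε : ℝ≥0∞} (hε : ε ≠ 0) :
    ∃ K, IsCompact K ∧ K ⊆ A ∧ μ A ≤ μ K + ε := by
  rw [AnalyticSet] at hA
  rcases hA with rfl | ⟨f, hf, rfl⟩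
  · exact ⟨∅, isCompact_empty, empty_subset _, by simp⟩
  obtain ⟨σ, hσ⟩ := exists_forall_prefixBounded (Q := fun P => μ (range f) < μ (f '' P) + ε)
    (by simpa using ENNReal.lt_add_right (measure_ne_top μ _) hε) fun s k hk => by
      have hmono : Monotone fun n => f '' prefixBounded (Function.update s k n) (k + 1) :=
        fun _ _ h => image_mono (prefixBounded.update_mono s k h)
      rwa [← prefixBounded.iUnion_update, image_iUnion, hmono.measure_iUnion, ENNReal.iSup_add,
        lt_iSup_iff] at hk
  have hanti : Antitone fun k => closure (f '' prefixBounded σ k) :=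
    fun _ _ h => closure_mono (image_mono (prefixBounded.antitone σ h))
  refine ⟨f '' Iic σ, (Pi.isCompact_Iic σ).image hf, image_subset_range _ _, ?_⟩
  calc μ (range f) ≤ (⨅ k, μ (closure (f '' prefixBounded σ k))) + ε := by
        rw [ENNReal.iInf_add]
        exact le_iInf fun k => (hσ k).le.trans (by gcongr; exact subset_closure)
    _ = μ (⋂ k, closure (f '' prefixBounded σ k)) + ε := by
        rw [hanti.measure_iInter (fun _ => measurableSet_closure.nullMeasurableSet)
          ⟨0, measure_ne_top μ _⟩]
    _ ≤ μ (f '' Iic σ) + ε := by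
        gcongr
        exact iInter_closure_image_prefixBounded_subset hf σ

theorem MeasureTheory.AnalyticSet.nullMeasurableSet (hA : AnalyticSet A) (μ : Measure α)
    [IsFiniteMeasure μ] : NullMeasurableSet A μ := by
  choose K hK hKA hμK using fun n : ℕ =>
    hA.exists_isCompact_subset_measure_le_add μ (ε := (n : ℝ≥0∞)⁻¹) (by simp)
  have hKm : NullMeasurableSet (⋃ n, K n) μ :=
    .iUnion fun n => (hK n).isClosed.measurableSet.nullMeasurableSet
  refine hKm.congr (ae_eq_of_subset_of_measure_ge (iUnion_subset hKA) ?_ hKm (measure_ne_top μ A))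
  refine ENNReal.le_of_forall_pos_le_add fun δ hδ _ => ?_
  obtain ⟨n, hn⟩ := ENNReal.exists_inv_nat_lt (a := δ) (by simpa using hδ.ne')
  calc μ A ≤ μ (K n) + (n : ℝ≥0∞)⁻¹ := hμK n
    _ ≤ μ (⋃ n, K n) + δ := by gcongr; exact subset_iUnion K n

end Capacitability

lemma MeasureTheory.AnalyticSet.inter {α : Type*} [TopologicalSpace α] [T2Space α] {s t : Set α}
    (hs : AnalyticSet s) (ht : AnalyticSet t) : AnalyticSet (s ∩ t) := by
  rw [inter_eq_iInter]
  exact AnalyticSet.iInter (Bool.forall_bool.2 ⟨ht, hs⟩)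

section GhostGap

variable {X β : Type*} {m : ℕ} {c : X → Bool} {ε : ℝ}

lemma badEvent_union (C D : Set (X → Bool)) :
    badEvent (C ∪ D) c m ε = badEvent C c m ε ∪ badEvent D c m ε := by
  ext p
  simp only [badEvent, mem_union, mem_ofPred_eq]
  grind

lemma badEvent_image (H : β → X → Bool) (S : Set β) :
    badEvent (H '' S) c m ε =
      Prod.snd '' (Prod.fst ⁻¹' S ∩ {q | ε / 2 ≤ ghostGap (H q.1) c m q.2}) := by
  ext p
  simp [badEvent]

variable [MeasurableSpace X] [MeasurableSpace β]

lemma measurable_empErr_uncurry {H : β → X → Bool} (hH : Measurable (Function.uncurry H))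
    (hc : Measurable c) : Measurable fun q : β × (Fin m → X) => empErr (H q.1) c m q.2 := by
  have hv : Measurable fun q : β × (Fin m → X) => fun i => (H q.1 (q.2 i), c (q.2 i)) := by
    refine measurable_pi_lambda _ fun i => ?_
    have hxi : Measurable fun q : β × (Fin m → X) => q.2 i :=
      (measurable_pi_apply i).comp measurable_snd
    have hHi : Measurable fun q : β × (Fin m → X) => H q.1 (q.2 i) :=
      hH.comp (measurable_fst.prodMk hxi)
    exact hHi.prodMk (hc.comp hxi)
  -- `empErr` only sees the finitely many label pairs `(H q.1 (q.2 i), c (q.2 i))`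
  have hF := measurable_of_countable fun v : Fin m → Bool × Bool =>
    ((Finset.univ.filter fun i => (v i).1 ≠ (v i).2).card : ℝ) / m
  exact (hF.comp hv :)

lemma measurable_ghostGap_uncurry {H : β → X → Bool} (hH : Measurable (Function.uncurry H))
    (hc : Measurable c) :
    Measurable fun q : β × ((Fin m → X) × (Fin m → X)) => ghostGap (H q.1) c m q.2 := by
  have hErr := measurable_empErr_uncurry (m := m) hH hc
  exact ((hErr.comp (measurable_fst.prodMk measurable_snd.snd)).sub
    (hErr.comp (measurable_fst.prodMk measurable_snd.fst)) :)

lemma measurable_ghostGap {h : X → Bool} (hh : Measurable h) (hc : Measurable c) :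
    Measurable (ghostGap h c m) :=
  ((measurable_ghostGap_uncurry (H := fun _ : Unit => h) (hh.comp measurable_snd) hc).comp
    (measurable_const (a := ()).prodMk measurable_id) :)

lemma measurableSet_badEvent_singleton {h : X → Bool} (hh : Measurable h) (hc : Measurable c) :
    MeasurableSet (badEvent {h} c m ε) := by
  simpa [badEvent] using measurableSet_le measurable_const (measurable_ghostGap (m := m) hh hc)

lemma analyticSet_badEvent_image [TopologicalSpace X] [PolishSpace X] [BorelSpace X]
    [TopologicalSpace β] [PolishSpace β] [BorelSpace β] {S : Set β} (hS : AnalyticSet S)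
    {H : β → X → Bool} (hH : Measurable (Function.uncurry H)) (hc : Measurable c) :
    AnalyticSet (badEvent (H '' S) c m ε) := by
  rw [badEvent_image]
  have hgap := measurableSet_le (f := fun _ => ε / 2) measurable_const
    (measurable_ghostGap_uncurry (m := m) hH hc)
  exact ((hS.preimage continuous_fst).inter (hgap.analyticSet (α := β × _))).image_of_continuous
    continuous_snd

end GhostGap

instance {X : Type*} [MeasurableSpace X] (μ : Measure X) [IsProbabilityMeasure μ] (m : ℕ) :
    IsProbabilityMeasure (prodMeas μ m) := by
  unfold prodMeas
  infer_instance

lemma singletonClass_eq_union_image (A : Set ℝ) :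
    singletonClass A = {fun _ => false} ∪ (fun a x => decide (x = a)) '' A := by
  simp only [singletonClass, image, eq_comm]

lemma measurable_uncurry_decide_eq :
    Measurable (Function.uncurry fun a x : ℝ => decide (x = a)) :=
  measurable_to_bool <| by
    convert measurableSet_eq_fun (β := ℝ) measurable_snd measurable_fst using 1
    ext
    simp [Function.uncurry]

theorem singletonClass_WBmeas {A : Set ℝ} (hA : AnalyticSet A) : WBmeas (singletonClass A) := by
  intro μ _ c hc m ε _
  rw [singletonClass_eq_union_image, badEvent_union]
  exact (measurableSet_badEvent_singleton measurable_const hc).nullMeasurableSet.union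
    ((analyticSet_badEvent_image hA measurable_uncurry_decide_eq hc).nullMeasurableSet _)

lemma empErr_one {X : Type*} (h c : X → Bool) (S : Fin 1 → X) :
    empErr h c 1 S = if h (S 0) ≠ c (S 0) then 1 else 0 := by
  split_ifs with hS <;> simp [empErr, Finset.filter_singleton, hS]

lemma supGhostGap_singletonClass_one (A : Set ℝ) (p : (Fin 1 → ℝ) × (Fin 1 → ℝ)) :
    supGhostGap (singletonClass A) (fun _ => false) 1 p =
      {p : (Fin 1 → ℝ) × (Fin 1 → ℝ) | p.2 0 ∈ A ∧ p.1 0 ≠ p.2 0}.indicator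
        (fun _ => 1) p := by
  apply IsGreatest.csSup_eq
  by_cases hp : p ∈ {p : (Fin 1 → ℝ) × (Fin 1 → ℝ) | p.2 0 ∈ A ∧ p.1 0 ≠ p.2 0}
  · rw [indicator_of_mem hp]
    refine ⟨⟨fun x => decide (x = p.2 0), Or.inr ⟨_, hp.1, rfl⟩, ?_⟩, ?_⟩
    · simp [ghostGap, empErr_one, hp.2]
    · rintro _ ⟨h, -, rfl⟩
      simp only [ghostGap, empErr_one]
      split_ifs <;> norm_num
  · rw [indicator_of_notMem hp]
    refine ⟨⟨fun _ => false, Or.inl rfl, by simp [ghostGap, empErr_one]⟩, ?_⟩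
    rintro _ ⟨h, rfl | ⟨a, ha, rfl⟩, rfl⟩
    · simp [ghostGap, empErr_one]
    · simp only [ghostGap, empErr_one]
      split_ifs <;> simp_all

theorem not_measurable_supGhostGap_singletonClass {A : Set ℝ} (hA : ¬MeasurableSet A) :
    ¬Measurable (supGhostGap (singletonClass A) (fun _ => false) 1) := by
  rw [funext (supGhostGap_singletonClass_one A), measurable_indicator_const_iff]
  intro hE
  have hslice : MeasurableSet (A \ {0}) := by
    have hembed :
        Measurable fun x : ℝ => ((fun _ => 0, fun _ => x) : (Fin 1 → ℝ) × (Fin 1 → ℝ)) :=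
      measurable_const.prodMk (measurable_pi_lambda _ fun _ => measurable_id)
    convert hembed hE using 1
    ext x
    simp [ne_comm]
  exact hA (sdiff_union_inter A {0} ▸
    hslice.union (subsingleton_singleton.anti inter_subset_right).measurableSet)

/-- Strict separation: for analytic non-Borel `A ⊆ ℝ`, the class `C_A` satisfies
`WBmeas` but fails the Borel ghost-gap condition: some supremum ghost-gap map with
measurable target is not Borel measurable. -/
theorem singletonClass_WBmeas_not_KW
    (A : Set ℝ) (hA : MeasureTheory.AnalyticSet A) (hnB : ¬ MeasurableSet A) :
    WBmeas (singletonClass A) ∧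
    ∃ c : ℝ → Bool, Measurable c ∧ ∃ m : ℕ,
      ¬ Measurable (supGhostGap (singletonClass A) c m) :=
  ⟨singletonClass_WBmeas hA, fun _ => false, measurable_const, 1,
    not_measurable_supGhostGap_singletonClass hnB⟩
end

section
/- Let X be a Polish space with Borel sigma-algebra, Theta1, Theta2, S standard Borel spaces, pi1 : Theta1 → S and pi2 : Theta2 → S measurable, and m : (Theta1 × Theta2) × X → Bool jointly measurable. Then the fiber-product amalgamation class Amal(pi1, pi2, m) = {x ↦ m((t1,t2), x) : pi1(t1) = pi2(t2)} satisfies WB_meas: every one-sided ghost bad event with measurable target is null-measurable under every product probability measure. -/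
open MeasureTheory

/-!
The bad event of the amalgamated class is the projection, along the parameter space
`Θ₁ × Θ₂`, of the Borel set of pairs (agreeing parameters, sample) whose ghost gap is at least
`ε / 2`; hence it is analytic. Analytic sets are null-measurable for every finite Borel measure
(Choquet capacitability): if `A = f (ℕ^ℕ)` with `f` continuous, bounding the coordinates one at
a time greedily loses at most `ε` of outer measure and ends in a compact box `Iic g`, whose image
is a compact subset of `A` of almost full measure.
-/

open MeasureTheory Filter Topology Set
open scoped ENNReal

theorem Monotone.exists_measure_iUnion_le_add {α : Type*} [MeasurableSpace α] {μ : Measure α}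
    {s : ℕ → Set α} (hs : Monotone s) (hfin : μ (⋃ n, s n) ≠ ∞) {δ : ℝ≥0∞} (hδ : δ ≠ 0) :
    ∃ n, μ (⋃ n, s n) ≤ μ (s n) + δ :=
  (((tendsto_measure_iUnion_atTop hs).add_const δ).eventually_const_lt
    (ENNReal.lt_add_right hfin hδ)).exists.imp fun _ => le_of_lt

def greedyBox (bound : Set (ℕ → ℕ) → ℕ → ℕ) : ℕ → Set (ℕ → ℕ)
  | 0 => univ
  | k + 1 => greedyBox bound k ∩ {x | x k ≤ bound (greedyBox bound k) k}

theorem greedyBox_eq (bound : Set (ℕ → ℕ) → ℕ → ℕ) (k : ℕ) :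
    greedyBox bound k = {x | ∀ i < k, x i ≤ bound (greedyBox bound i) i} := by
  induction k with
  | zero => simp [greedyBox]
  | succ k ih =>
    ext x
    exact (and_congr_left' (Set.ext_iff.1 ih x)).trans Nat.forall_lt_succ_right.symm

theorem exists_measure_range_le_image_box_add {Y : Type*} [MeasurableSpace Y] (ν : Measure Y)
    [IsFiniteMeasure ν] (f : (ℕ → ℕ) → Y) {ε : ℝ≥0∞} (hε : ε ≠ 0) :
    ∃ g : ℕ → ℕ, ∀ k, ν (range f) ≤ ν (f '' {x | ∀ i < k, x i ≤ g i}) + ε := by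
  obtain ⟨δ, hδpos, hδsum⟩ := ENNReal.exists_pos_sum_of_countable hε ℕ
  have hstep : ∀ B k, ∃ j, ν (f '' B) ≤ ν (f '' (B ∩ {x | x k ≤ j})) + δ k := by
    intro B k
    have hmono : Monotone fun j : ℕ => f '' (B ∩ {x | x k ≤ j}) := fun a b hab =>
      image_mono (inter_subset_inter_right _ fun x hx => le_trans hx hab)
    have hunion : ⋃ j : ℕ, f '' (B ∩ {x | x k ≤ j}) = f '' B := by
      rw [← image_iUnion, ← inter_iUnion, iUnion_eq_univ_iff.2 fun x => ⟨x k, le_refl (x k)⟩,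
        inter_univ]
    simpa only [hunion] using
      hmono.exists_measure_iUnion_le_add (measure_ne_top ν _)
        (ENNReal.coe_ne_zero.2 (hδpos k).ne')
  choose bound hbound using hstep
  have hgreedy : ∀ k, ν (range f) ≤
      ν (f '' greedyBox bound k) + ∑ i ∈ Finset.range k, (δ i : ℝ≥0∞) := by
    intro k
    induction k with
    | zero => simp [greedyBox]
    | succ k ih =>
      calc ν (range f) ≤ ν (f '' greedyBox bound k) + ∑ i ∈ Finset.range k, (δ i : ℝ≥0∞) := ih
        _ ≤ ν (f '' greedyBox bound (k + 1)) + δ k + ∑ i ∈ Finset.range k, (δ i : ℝ≥0∞) :=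
          add_le_add_left (hbound _ k) _
        _ = ν (f '' greedyBox bound (k + 1)) + ∑ i ∈ Finset.range (k + 1), (δ i : ℝ≥0∞) := by
          rw [Finset.sum_range_succ, add_assoc, add_comm (δ k : ℝ≥0∞)]
  refine ⟨fun k => bound (greedyBox bound k) k, fun k => ?_⟩
  rw [← greedyBox_eq]
  exact (hgreedy k).trans (add_le_add_right ((ENNReal.sum_le_tsum _).trans hδsum.le) _)

theorem isCompact_Iic_pi_nat {ι : Type*} (g : ι → ℕ) : IsCompact (Iic g) := by
  rw [← pi_univ_Iic]
  exact isCompact_univ_pi fun i => (finite_Iic (g i)).isCompact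

theorem iInter_closure_image_box_subset_image_Iic {Y : Type*} [TopologicalSpace Y]
    [FirstCountableTopology Y] [T2Space Y] {f : (ℕ → ℕ) → Y} (hf : Continuous f) (g : ℕ → ℕ) :
    ⋂ k, closure (f '' {x | ∀ i < k, x i ≤ g i}) ⊆ f '' Iic g := by
  intro y hy
  obtain ⟨U, hU⟩ := (𝓝 y).exists_antitone_basis
  have hx : ∀ k, ∃ x, (∀ i < k, x i ≤ g i) ∧ f x ∈ U k := fun k => by
    obtain ⟨_, hmem, x, hx, rfl⟩ := mem_closure_iff_nhds.1 (mem_iInter.1 hy k) (U k) (hU.mem k)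
    exact ⟨x, hx, hmem⟩
  choose x hxg hxU using hx
  obtain ⟨a, ha, φ, hφ, hlim⟩ :=
    (isCompact_Iic_pi_nat g).tendsto_subseq (x := fun k => x k ⊓ g) fun _ => mem_Iic.2 inf_le_right
  -- truncating `x k` at `g` only changes coordinates `≥ k`
  have hxa : Tendsto (x ∘ φ) atTop (𝓝 a) := by
    refine tendsto_pi_nhds.2 fun i => (((continuous_apply i).tendsto a).comp hlim).congr' ?_
    filter_upwards [hφ.tendsto_atTop.eventually_gt_atTop i] with l hl
    exact inf_eq_left.2 (hxg _ i hl)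
  exact ⟨a, ha, tendsto_nhds_unique ((hf.tendsto a).comp hxa)
    ((hU.tendsto hxU).comp hφ.tendsto_atTop)⟩

theorem exists_isCompact_subset_range_measure_le_add {Y : Type*} [TopologicalSpace Y]
    [FirstCountableTopology Y] [T2Space Y] [MeasurableSpace Y] [OpensMeasurableSpace Y]
    (ν : Measure Y) [IsFiniteMeasure ν] {f : (ℕ → ℕ) → Y} (hf : Continuous f) {ε : ℝ≥0∞}
    (hε : ε ≠ 0) : ∃ K, IsCompact K ∧ K ⊆ range f ∧ ν (range f) ≤ ν K + ε := by
  obtain ⟨g, hg⟩ := exists_measure_range_le_image_box_add ν f hε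
  set C : ℕ → Set Y := fun k => closure (f '' {x | ∀ i < k, x i ≤ g i})
  have hC : Antitone C := fun a b hab =>
    closure_mono (image_mono fun x hx i hi => hx i (hi.trans_le hab))
  refine ⟨f '' Iic g, (isCompact_Iic_pi_nat g).image hf, image_subset_range _ _, ?_⟩
  calc ν (range f) ≤ (⨅ k, ν (C k)) + ε := by
        rw [ENNReal.iInf_add]
        exact le_iInf fun k => (hg k).trans (by gcongr; exact subset_closure)
    _ = ν (⋂ k, C k) + ε := by
        rw [hC.measure_iInter (fun k => isClosed_closure.measurableSet.nullMeasurableSet)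
          ⟨0, measure_ne_top ν _⟩]
    _ ≤ ν (f '' Iic g) + ε := by
        gcongr
        exact iInter_closure_image_box_subset_image_Iic hf g

theorem nullMeasurableSet_of_forall_exists_measurableSet_subset_le_add {α : Type*}
    [MeasurableSpace α] {μ : Measure α} {s : Set α} (hs : μ s ≠ ∞)
    (h : ∀ ε ≠ 0, ∃ t ⊆ s, MeasurableSet t ∧ μ s ≤ μ t + ε) : NullMeasurableSet s μ := by
  choose! t hts ht hμt using h
  have hinv : ∀ n : ℕ, (n : ℝ≥0∞)⁻¹ ≠ 0 := fun n =>
    ENNReal.inv_ne_zero.2 (ENNReal.natCast_ne_top n)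
  set u := ⋃ n : ℕ, t (n : ℝ≥0∞)⁻¹
  have hu : MeasurableSet u := MeasurableSet.iUnion fun n => ht _ (hinv n)
  have hus : u ⊆ s := iUnion_subset fun n => hts _ (hinv n)
  have hμu : μ s ≤ μ u := by
    have hlim : Tendsto (fun n : ℕ => μ u + (n : ℝ≥0∞)⁻¹) atTop (𝓝 (μ u)) := by
      simpa using tendsto_const_nhds.add ENNReal.tendsto_inv_nat_nhds_zero
    refine ge_of_tendsto' hlim fun n => (hμt _ (hinv n)).trans ?_
    gcongr
    exact subset_iUnion (fun n : ℕ => t (n : ℝ≥0∞)⁻¹) n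
  exact hu.nullMeasurableSet.congr
    (ae_eq_of_subset_of_measure_ge hus hμu hu.nullMeasurableSet hs)

theorem MeasureTheory.AnalyticSet.nullMeasurableSet_s14 {Y : Type*} [TopologicalSpace Y]
    [FirstCountableTopology Y] [T2Space Y] [MeasurableSpace Y] [OpensMeasurableSpace Y]
    {A : Set Y} (hA : AnalyticSet A) (ν : Measure Y) [IsFiniteMeasure ν] :
    NullMeasurableSet A ν := by
  rw [AnalyticSet] at hA
  rcases hA with rfl | ⟨f, hf, rfl⟩
  · exact nullMeasurableSet_empty
  refine nullMeasurableSet_of_forall_exists_measurableSet_subset_le_add (measure_ne_top ν _)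
    fun ε hε => ?_
  obtain ⟨K, hK, hKf, hle⟩ := exists_isCompact_subset_range_measure_le_add ν hf hε
  exact ⟨K, hKf, hK.isClosed.measurableSet, hle⟩

theorem measurable_empErr {α Θ X : Type*} [MeasurableSpace α] [MeasurableSpace Θ]
    [MeasurableSpace X] {F : Θ × X → Bool} (hF : Measurable F) {c : X → Bool} (hc : Measurable c)
    {m : ℕ} {θ : α → Θ} {S : α → Fin m → X} (hθ : Measurable θ) (hS : Measurable S) :
    Measurable fun a => empErr (fun x => F (θ a, x)) c m (S a) := by
  -- the error only depends on the finitely many possible label vectors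
  have hlabels : Measurable fun a => fun i => (F (θ a, S a i), c (S a i)) := by
    fun_prop
  have herr : Measurable fun v : Fin m → Bool × Bool =>
      ((Finset.univ.filter fun i => (v i).1 ≠ (v i).2).card : ℝ) / m :=
    measurable_of_countable _
  simpa only [empErr, Function.comp_def] using herr.comp hlabels

theorem analyticSet_badEvent_image_s14 {X Θ : Type*} [TopologicalSpace X] [PolishSpace X]
    [MeasurableSpace X] [BorelSpace X] [MeasurableSpace Θ] [StandardBorelSpace Θ]
    {F : Θ × X → Bool} (hF : Measurable F) {T : Set Θ} (hT : MeasurableSet T) {c : X → Bool}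
    (hc : Measurable c) (m : ℕ) (ε : ℝ) :
    AnalyticSet (badEvent ((fun t x => F (t, x)) '' T) c m ε) := by
  have himage : badEvent ((fun t x => F (t, x)) '' T) c m ε = Prod.snd ''
      {q : Θ × ((Fin m → X) × (Fin m → X)) |
        q.1 ∈ T ∧ ε / 2 ≤ ghostGap (fun x => F (q.1, x)) c m q.2} := by
    ext p
    simp [badEvent]
  have hgap : Measurable fun q : Θ × ((Fin m → X) × (Fin m → X)) =>
      ghostGap (fun x => F (q.1, x)) c m q.2 := by
    unfold ghostGap
    exact (measurable_empErr hF hc measurable_fst measurable_snd.snd).sub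
      (measurable_empErr hF hc measurable_fst measurable_snd.fst)
  rw [himage]
  exact ((measurable_fst hT).inter (measurableSet_le measurable_const hgap)).analyticSet_image
    measurable_snd

/-- Fiber-product amalgamation preserves `WBmeas`: the class of merged hypotheses
over agreeing parameter pairs satisfies `WBmeas`. -/
theorem amalgamation_WBmeas
    {X : Type*} [TopologicalSpace X] [PolishSpace X] [MeasurableSpace X] [BorelSpace X]
    {Θ₁ Θ₂ S : Type*}
    [MeasurableSpace Θ₁] [StandardBorelSpace Θ₁]
    [MeasurableSpace Θ₂] [StandardBorelSpace Θ₂]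
    [MeasurableSpace S] [StandardBorelSpace S]
    (π₁ : Θ₁ → S) (π₂ : Θ₂ → S) (hπ₁ : Measurable π₁) (hπ₂ : Measurable π₂)
    (merge : (Θ₁ × Θ₂) × X → Bool) (hmerge : Measurable merge) :
    WBmeas {h : X → Bool | ∃ (t₁ : Θ₁) (t₂ : Θ₂), π₁ t₁ = π₂ t₂ ∧
      h = fun x => merge ((t₁, t₂), x)} := by
  intro μ _ c hc m ε _
  have hclass : {h : X → Bool | ∃ (t₁ : Θ₁) (t₂ : Θ₂), π₁ t₁ = π₂ t₂ ∧
      h = fun x => merge ((t₁, t₂), x)} =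
      (fun t x => merge (t, x)) '' {t : Θ₁ × Θ₂ | π₁ t.1 = π₂ t.2} := by
    ext h
    simp [eq_comm]
  have : IsFiniteMeasure (prodMeas μ m) := by
    unfold prodMeas
    infer_instance
  rw [hclass]
  exact (analyticSet_badEvent_image_s14 hmerge
    (measurableSet_eq_fun (hπ₁.comp measurable_fst) (hπ₂.comp measurable_snd)) hc m ε
    ).nullMeasurableSet_s14 _
end
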